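/- arXiv:1105.4641 — 4 statements merged into one kernel-verified Lean document; each statement's English description precedes it below -/
import Mathlib

section
/- The affine span of the six edge-midpoints m 0, …, m 5 has dimension 4; i.e., the polytope D = convexHull ℝ {m 0, …, m 5} is four-dimensional. -/
noncomputable section

def e (i : Fin 6) : Fin 6 → ℝ := fun j => if j = i then 1 else 0

def m (i : Fin 6) : Fin 6 → ℝ := (1 / 2 : ℝ) • (e i + e (i + 1))

def Δ : Set (Fin 6 → ℝ) := convexHull ℝ {e 0, e 1, e 2, e 3, e 4, e 5}

def D : Set (Fin 6 → ℝ) := convexHull ℝ {m 0, m 1, m 2, m 3, m 4, m 5}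

-- The alternating sum telescopes to `(e 0 + e 5) / 2`.
lemma m_five_eq_alternating_sum : m 5 = m 0 - m 1 + m 2 - m 3 + m 4 := by
  funext j
  fin_cases j <;> simp [m, e]

lemma m_five_mem_affineSpan : m 5 ∈ affineSpan ℝ {m 0, m 1, m 2, m 3, m 4} := by
  have hvec : m 0 -ᵥ m 1 + (m 2 -ᵥ m 3) ∈ vectorSpan ℝ {m 0, m 1, m 2, m 3, m 4} :=
    add_mem (vsub_mem_vectorSpan ℝ (by simp) (by simp)) (vsub_mem_vectorSpan ℝ (by simp) (by simp))
  have hm4 : m 4 ∈ affineSpan ℝ {m 0, m 1, m 2, m 3, m 4} := mem_affineSpan ℝ (by simp)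
  convert vadd_mem_affineSpan_of_mem_affineSpan_of_mem_vectorSpan hm4 hvec using 1
  rw [m_five_eq_alternating_sum, vadd_eq_add, vsub_eq_sub, vsub_eq_sub]
  abel

-- `m i` has coordinate `i + 1` equal to `1 / 2` and vanishes beyond it, so reading the
-- coordinates `5, 4, 3, 2, 1` of a vanishing combination kills its coefficients one by one.
lemma linearIndependent_m_zero_to_four : LinearIndependent ℝ ![m 0, m 1, m 2, m 3, m 4] := by
  rw [Fintype.linearIndependent_iff]
  intro g hg
  have h5 := congrFun hg 5
  have h4 := congrFun hg 4
  have h3 := congrFun hg 3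
  have h2 := congrFun hg 2
  have h1 := congrFun hg 1
  simp [Fin.sum_univ_five, m, e] at h5 h4 h3 h2 h1
  intro i
  fin_cases i <;> simp <;> linarith

/-- The affine span of the six edge-midpoints has dimension 4: the polytope `D`
is four-dimensional. -/
theorem midpoints_affineSpan_dim_four :
    Module.finrank ℝ
      (affineSpan ℝ ({m 0, m 1, m 2, m 3, m 4, m 5} : Set (Fin 6 → ℝ))).direction = 4 := by
  have hrange : Set.range ![m 0, m 1, m 2, m 3, m 4] = {m 0, m 1, m 2, m 3, m 4} := by
    simp only [Matrix.range_cons, Matrix.range_empty, Set.union_empty, Set.singleton_union]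
  have hset : ({m 0, m 1, m 2, m 3, m 4, m 5} : Set (Fin 6 → ℝ))
      = insert (m 5) {m 0, m 1, m 2, m 3, m 4} := by
    simp only [Set.insert_comm (m 5), Set.pair_comm (m 5)]
  rw [hset, affineSpan_insert_eq_affineSpan ℝ m_five_mem_affineSpan, direction_affineSpan,
    ← hrange]
  exact linearIndependent_m_zero_to_four.affineIndependent.finrank_vectorSpan (by simp)
end
end

section
/- There exists an affine map F : ℝ^6 →ᵃ[ℝ] ℝ² such that F (m i) = s i for every i ∈ Fin 6 (the partial refining map from the simplex to the hexagon exists on the polytope spanned by the edge midpoints). -/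
noncomputable section

/-- The vertices of a regular hexagon in `ℝ²`. -/
def s (j : Fin 6) : ℝ × ℝ :=
  (Real.cos (((j : ℕ) + 1 : ℝ) * Real.pi / 3), Real.sin (((j : ℕ) + 1 : ℝ) * Real.pi / 3))

/-- The hexagon. -/
def C : Set (ℝ × ℝ) := convexHull ℝ {s 0, s 1, s 2, s 3, s 4, s 5}

/-! Send `e i` to the vertex at angle `i π/3 + π/6` of the hexagon of circumradius `2/√3`. The
midpoint of two consecutive such vertices lies at angle `(i+1) π/3`, at distance
`(2/√3) cos (π/6) = 1` from the origin, which is `s i`. -/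

open Real

def circlePoint (θ : ℝ) : ℝ × ℝ := (cos θ, sin θ)

lemma circlePoint_add_two_pi (θ : ℝ) : circlePoint (θ + 2 * π) = circlePoint θ := by
  simp only [circlePoint, cos_add_two_pi, sin_add_two_pi]

lemma midpoint_circlePoint (θ α : ℝ) :
    (1 / 2 : ℝ) • (circlePoint (θ - α) + circlePoint (θ + α)) = cos α • circlePoint θ := by
  simp only [circlePoint, cos_sub, cos_add, sin_sub, sin_add, Prod.smul_mk, Prod.mk_add_mk,
    smul_eq_mul, Prod.mk.injEq]
  constructor <;> ring

lemma circlePoint_fin_succ {n : ℕ} {φ : ℝ} (hφ : (n + 1) * φ = 2 * π) (i : Fin (n + 1)) (c : ℝ) :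
    circlePoint (((i + 1 : Fin (n + 1)) : ℕ) * φ + c) = circlePoint (((i : ℕ) + 1) * φ + c) := by
  rw [Fin.val_add_one]
  split_ifs with h
  · rw [h, Fin.val_last, ← circlePoint_add_two_pi, ← hφ]
    congr 1
    ring
  · push_cast
    rfl

lemma e_eq_single (i : Fin 6) : e i = Pi.single i 1 := by
  ext j
  simp only [e, Pi.single_apply]

lemma linearCombination_m {M : Type*} [AddCommGroup M] [Module ℝ M] (v : Fin 6 → M) (i : Fin 6) :
    Fintype.linearCombination ℝ v (m i) = (1 / 2 : ℝ) • (v i + v (i + 1)) := by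
  simp only [m, e_eq_single, map_smul, map_add, Fintype.linearCombination_apply_single, one_smul]

def hexagonLift (i : Fin 6) : ℝ × ℝ := (2 / √3) • circlePoint ((i : ℕ) * (π / 3) + π / 6)

lemma midpoint_hexagonLift (i : Fin 6) :
    (1 / 2 : ℝ) • (hexagonLift i + hexagonLift (i + 1)) = s i := by
  set θ : ℝ := ((i : ℕ) + 1) * (π / 3)
  have h_left : hexagonLift i = (2 / √3) • circlePoint (θ - π / 6) := by
    rw [hexagonLift]; congr 2; ring
  have h_right : hexagonLift (i + 1) = (2 / √3) • circlePoint (θ + π / 6) := by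
    rw [hexagonLift, circlePoint_fin_succ (n := 5) (by ring)]
  have h_s : s i = circlePoint θ := by
    simp only [s, circlePoint, θ, mul_div_assoc]
  have h_radius : 2 / √3 * (√3 / 2) = 1 := by field_simp
  rw [h_left, h_right, ← smul_add, smul_comm, midpoint_circlePoint, smul_smul, cos_pi_div_six,
    h_radius, one_smul, h_s]

/-- There exists an affine map `F : ℝ^6 →ᵃ[ℝ] ℝ²` sending each edge midpoint `m i`
to the hexagon vertex `s i`. -/
theorem exists_refining_affine_map :
    ∃ F : (Fin 6 → ℝ) →ᵃ[ℝ] ℝ × ℝ, ∀ i : Fin 6, F (m i) = s i :=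
  ⟨(Fintype.linearCombination ℝ hexagonLift).toAffineMap, fun i => by
    rw [LinearMap.coe_toAffineMap, linearCombination_m, midpoint_hexagonLift]⟩
end
end

section
/- For every affine map F : ℝ^6 →ᵃ[ℝ] ℝ² satisfying F (m i) = s i for all i ∈ Fin 6, and for every j ∈ Fin 6, the fiber of the hexagon vertex s j within the domain of definition is a single point: {x ∈ D | F x = s j} = {m j}. -/
/-!
The functional `⟨s j, F ·⟩` is affine on `ℝ^6`; on the midpoints it takes the values
`⟨s j, s a⟩ = cos ((j - a) π / 3)`, which equal `1` at `a = j` and are `< 1` otherwise.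
An affine function whose maximum over a set is attained at exactly one point `y` of the set
attains that value on the convex hull only at `y`, since the union of `{y}` with the open
half-space below the maximum is convex. Hence `F x = s j` forces `x = m j`.
-/

noncomputable section

section StrictMaximum

variable {𝕜 E : Type*} [Ring 𝕜] [LinearOrder 𝕜] [IsStrictOrderedRing 𝕜] [AddCommGroup E]
  [Module 𝕜 E]

theorem convex_insert_setOf_apply_lt (g : E →ᵃ[𝕜] 𝕜) (y : E) :
    Convex 𝕜 (insert y {z | g z < g y}) := by
  rw [convex_iff_forall_pos]
  rintro p hp q hq a b ha hb hab
  by_cases hpq : p = y ∧ q = y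
  · obtain ⟨rfl, rfl⟩ := hpq
    exact Or.inl (Convex.combo_self hab _)
  · right
    have hp' : g p ≤ g y := by rcases hp with rfl | hp; exacts [le_rfl, le_of_lt hp]
    have hq' : g q ≤ g y := by rcases hq with rfl | hq; exacts [le_rfl, le_of_lt hq]
    have hstrict : g p < g y ∨ g q < g y := by
      rcases hp with rfl | hp
      · exact Or.inr (hq.resolve_left fun h => hpq ⟨rfl, h⟩)
      · exact Or.inl hp
    show g (a • p + b • q) < g y
    rw [Convex.combo_affine_apply hab, smul_eq_mul, smul_eq_mul]
    calc a * g p + b * g q < a * g y + b * g y := by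
          rcases hstrict with h | h
          · exact add_lt_add_of_lt_of_le (mul_lt_mul_of_pos_left h ha)
              (mul_le_mul_of_nonneg_left hq' hb.le)
          · exact add_lt_add_of_le_of_lt (mul_le_mul_of_nonneg_left hp' ha.le)
              (mul_lt_mul_of_pos_left h hb)
      _ = g y := by rw [← add_mul, hab, one_mul]

theorem eq_of_mem_convexHull_of_apply_le {S : Set E} {x y : E} (g : E →ᵃ[𝕜] 𝕜)
    (hS : ∀ z ∈ S, z ≠ y → g z < g y) (hx : x ∈ convexHull 𝕜 S) (hgx : g y ≤ g x) : x = y := by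
  have hsub : S ⊆ insert y {z | g z < g y} := fun z hz => by
    by_cases h : z = y
    · exact Or.inl h
    · exact Or.inr (hS z hz h)
  rcases convexHull_min hsub (convex_insert_setOf_apply_lt g y) hx with h | h
  · exact h
  · exact absurd hgx (not_le.2 h)

end StrictMaximum

theorem s_fst_mul_add_snd_mul (j a : Fin 6) :
    (s j).1 * (s a).1 + (s j).2 * (s a).2 = Real.cos (((j : ℕ) - (a : ℕ) : ℝ) * (Real.pi / 3)) := by
  rw [s, s, ← Real.cos_sub]
  ring_nf

theorem s_fst_mul_add_snd_mul_lt (j a : Fin 6) (h : a ≠ j) :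
    (s j).1 * (s a).1 + (s j).2 * (s a).2 < (s j).1 * (s j).1 + (s j).2 * (s j).2 := by
  rw [s_fst_mul_add_snd_mul, s_fst_mul_add_snd_mul, sub_self, zero_mul, Real.cos_zero]
  refine (Real.cos_le_one _).lt_of_ne fun hcos => h ?_
  have hj : ((j : ℕ) : ℝ) < 6 := by exact_mod_cast j.isLt
  have ha : ((a : ℕ) : ℝ) < 6 := by exact_mod_cast a.isLt
  have hj0 : (0 : ℝ) ≤ (j : ℕ) := Nat.cast_nonneg _
  have ha0 : (0 : ℝ) ≤ (a : ℕ) := Nat.cast_nonneg _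
  have hπ := Real.pi_pos
  have hzero := (Real.cos_eq_one_iff_of_lt_of_lt (by nlinarith) (by nlinarith)).1 hcos
  have : ((a : ℕ) : ℝ) = (j : ℕ) := by
    rcases mul_eq_zero.1 hzero with h' | h' <;> linarith
  exact Fin.ext (by exact_mod_cast this)

theorem m_mem_D (j : Fin 6) : m j ∈ D :=
  subset_convexHull ℝ _ (by fin_cases j <;> simp)

/-- For any affine map sending each midpoint `m i` to the hexagon vertex `s i`, the
fiber in `D` over each hexagon vertex `s j` is the single point `m j`. -/
theorem refining_map_fiber_of_vertex :
    ∀ F : (Fin 6 → ℝ) →ᵃ[ℝ] ℝ × ℝ, (∀ i : Fin 6, F (m i) = s i) →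
      ∀ j : Fin 6, {x ∈ D | F x = s j} = {m j} := by
  intro F hF j
  ext x
  refine ⟨fun ⟨hxD, hFx⟩ => ?_, by rintro rfl; exact ⟨m_mem_D j, hF j⟩⟩
  let ℓ : ℝ × ℝ →ₗ[ℝ] ℝ := (s j).1 • LinearMap.fst ℝ ℝ ℝ + (s j).2 • LinearMap.snd ℝ ℝ ℝ
  refine eq_of_mem_convexHull_of_apply_le (ℓ.toAffineMap.comp F) ?_ hxD
    (by simp [ℓ, hFx, hF])
  intro z hz hne
  obtain ⟨a, rfl⟩ : ∃ a, z = m a := by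
    simp only [Set.mem_insert_iff, Set.mem_singleton_iff] at hz
    rcases hz with rfl | rfl | rfl | rfl | rfl | rfl <;> exact ⟨_, rfl⟩
  simpa [ℓ, hF] using s_fst_mul_add_snd_mul_lt j a (by rintro rfl; exact hne rfl)
end
end

section
/- The forms pull back correctly under the refining map: for every affine map F : ℝ^6 →ᵃ[ℝ] ℝ² satisfying F (m i) = s i for all i ∈ Fin 6, every i ∈ Fin 6, and every x ∈ D, one has v i (F x) = x i + x (i+1) + x (i+2) (coordinates of x ∈ ℝ^6, indices cyclic in Fin 6); i.e., the extreme form v i of the hexagon corresponds to the extreme form d i + d (i+1) + d (i+2) of the simplex's convex-form space. -/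
noncomputable section

/-- The prescribed vertex values of the hexagon's extreme convex forms:
`v i (s j) = 1` if `j ∈ {i, i+1}`, `v i (s j) = 1/2` if `j ∈ {i-1, i+2}`, and
`v i (s j) = 0` if `j ∈ {i+3, i+4}` (indices cyclic in `Fin 6`). -/
def IsHexForms (v : Fin 6 → ((ℝ × ℝ) →ᵃ[ℝ] ℝ)) : Prop :=
  ∀ i : Fin 6,
    v i (s i) = 1 ∧ v i (s (i + 1)) = 1 ∧
    v i (s (i - 1)) = 1 / 2 ∧ v i (s (i + 2)) = 1 / 2 ∧
    v i (s (i + 3)) = 0 ∧ v i (s (i + 4)) = 0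

/-!
Both `v i ∘ F` and `x ↦ x i + x (i+1) + x (i+2)` are affine, so they agree on `D` as soon as
they agree at its vertices `m j`. Writing `j = i + k`, both sides at `m (i + k)` depend only on
`k`, which leaves six numerical checks.
-/

/-- The values `v i (s (i + k))` prescribed by `IsHexForms`. -/
def hexProfile : Fin 6 → ℝ := ![1, 1, 1 / 2, 0, 0, 1 / 2]

theorem IsHexForms.apply_s_add {v : Fin 6 → ((ℝ × ℝ) →ᵃ[ℝ] ℝ)} (hv : IsHexForms v)
    (i k : Fin 6) : v i (s (i + k)) = hexProfile k := by
  obtain ⟨h0, h1, h5, h2, h3, h4⟩ := hv i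
  rw [show i - 1 = i + 5 by rw [sub_eq_add_neg]; rfl] at h5
  fin_cases k <;> simp [hexProfile, *]

theorem m_add_apply_add (j k l : Fin 6) : m (j + k) (j + l) = m k l := by
  simp only [m, e, Pi.smul_apply, Pi.add_apply, add_assoc, add_right_inj]

def simplexForm (i : Fin 6) : (Fin 6 → ℝ) →ₗ[ℝ] ℝ :=
  (LinearMap.proj i : (Fin 6 → ℝ) →ₗ[ℝ] ℝ) + LinearMap.proj (i + 1) + LinearMap.proj (i + 2)

theorem simplexForm_m_add (i k : Fin 6) : simplexForm i (m (i + k)) = hexProfile k := by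
  have h0 : m (i + k) i = m k 0 := by simpa using m_add_apply_add i k 0
  simp only [simplexForm, LinearMap.add_apply, LinearMap.proj_apply, h0, m_add_apply_add]
  fin_cases k <;> norm_num +decide [m, e, hexProfile]

/-- The forms pull back correctly under the refining map: for any affine map `F`
with `F (m i) = s i` and any `x ∈ D`, one has `v i (F x) = x i + x (i+1) + x (i+2)`;
i.e. the extreme form `v i` of the hexagon corresponds to the extreme form
`d i + d (i+1) + d (i+2)` of the simplex's convex-form space. -/
theorem forms_pull_back :
    ∀ F : (Fin 6 → ℝ) →ᵃ[ℝ] ℝ × ℝ, (∀ i : Fin 6, F (m i) = s i) →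
      ∀ v : Fin 6 → ((ℝ × ℝ) →ᵃ[ℝ] ℝ), IsHexForms v →
        ∀ i : Fin 6, ∀ x ∈ D, v i (F x) = x i + x (i + 1) + x (i + 2) := by
  intro F hF v hv i x hx
  have h_vertices :
      Set.EqOn ((v i).comp F) (simplexForm i).toAffineMap {m 0, m 1, m 2, m 3, m 4, m 5} := by
    have h_m (k : Fin 6) :
        (v i).comp F (m (i + k)) = (simplexForm i).toAffineMap (m (i + k)) := by
      simp [hF, hv.apply_s_add, simplexForm_m_add]
    rintro y (rfl | rfl | rfl | rfl | rfl | rfl) <;>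
      simpa only [add_sub_cancel] using h_m (_ - i)
  exact AffineMap.eqOn_affineSpan h_vertices (convexHull_subset_affineSpan _ hx)
end
end
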